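/- Let b₁, …, b_k be distinct real numbers and λ₁, …, λ_k > 0. Then the function φ(z) := Im( z − Σ_{i=1}^{k} λ_i/(z − b_i) ) = r·(1 + Σ_{i=1}^{k} λ_i/|z − b_i|²) is positive and harmonic on the upper half-plane H, so the pair β := ∂_{z̄} log φ + 1/(z − z̄), Φ := i(z − z̄)·∂_z log φ satisfies the hyperbolic vortex equations (V1) and (V2) on H. Moreover, for z ∈ H one has Φ(z) = 0 if and only if 1 + Σ_{i=1}^{k} λ_i/(z − b_i)² = 0, i.e. if and only if z is a root of the polynomial P(z) := Π_{i=1}^{k}(z − b_i)² + Σ_{i=1}^{k} λ_i·Π_{j ≠ i}(z − b_j)²; P has degree 2k, has no real roots, and has exactly k roots in H counted with multiplicity. -/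

import Mathlib

open Complex ComplexConjugate

noncomputable section

/-- Wirtinger derivative ∂_z f = (1/2)(∂_t f − i ∂_r f). -/
def wdz (f : ℂ → ℂ) (z : ℂ) : ℂ :=
  (2:ℂ)⁻¹ * (fderiv ℝ f z 1 - Complex.I * fderiv ℝ f z Complex.I)

/-- Wirtinger derivative ∂_z̄ f = (1/2)(∂_t f + i ∂_r f). -/
def wdzbar (f : ℂ → ℂ) (z : ℂ) : ℂ :=
  (2:ℂ)⁻¹ * (fderiv ℝ f z 1 + Complex.I * fderiv ℝ f z Complex.I)

/-- A real-valued function regarded as complex-valued. -/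
def cre (φ : ℂ → ℝ) : ℂ → ℂ := fun z => (φ z : ℂ)

/-- ∂_z log φ := (∂_z φ)/φ for positive real φ. -/
def dzlog (φ : ℂ → ℝ) (z : ℂ) : ℂ := wdz (cre φ) z / (φ z : ℂ)

/-- ∂_z̄ log φ := (∂_z̄ φ)/φ for positive real φ. -/
def dzbarlog (φ : ℂ → ℝ) (z : ℂ) : ℂ := wdzbar (cre φ) z / (φ z : ℂ)

/-- Flat Laplacian ∂_t² + ∂_r² on ℂ ≅ ℝ², where z = t + ir. -/
def lap2 (φ : ℂ → ℝ) (z : ℂ) : ℝ :=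
  fderiv ℝ (fun w => fderiv ℝ φ w 1) z 1 +
  fderiv ℝ (fun w => fderiv ℝ φ w Complex.I) z Complex.I

/-- The upper half-plane. -/
def H : Set ℂ := {z : ℂ | 0 < z.im}

/-- The connection coefficient β = ∂_z̄ log φ + 1/(z − z̄) of the vortex ansatz. -/
def betaOf (φ : ℂ → ℝ) (z : ℂ) : ℂ := dzbarlog φ z + 1 / (z - conj z)

/-- The Higgs field Φ = i(z − z̄)·∂_z log φ of the vortex ansatz. -/
def higgsOf (φ : ℂ → ℝ) (z : ℂ) : ℂ := Complex.I * (z - conj z) * dzlog φ z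

open Polynomial in
/-- The polynomial P(z) = Π(z−bᵢ)² + Σ λᵢ·Π_{j≠i}(z−bⱼ)². -/
def P10 (k : ℕ) (b lam : Fin k → ℝ) : Polynomial ℂ :=
  ∏ i : Fin k, (X - C ((b i : ℂ)))^2 +
    ∑ i : Fin k, C ((lam i : ℂ)) * ∏ j ∈ Finset.univ.erase i, (X - C ((b j : ℂ)))^2

/-- The 't Hooft super-potential φ(z) = Im(z − Σ λᵢ/(z − bᵢ)). -/
def phi10 (k : ℕ) (b lam : Fin k → ℝ) (z : ℂ) : ℝ :=
  (z - ∑ i : Fin k, (lam i : ℂ) / (z - (b i : ℂ))).im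


/-!
`φ` is the imaginary part of the holomorphic function `F z = z - ∑ λᵢ / (z - bᵢ)`, hence
harmonic. For any `φ = Im F` with `φ ≠ 0` the ansatz gives `Φ = i r F' / φ` and
`β = (i / 2) (conj F' / φ - 1 / r)`, and since `∂_z̄ F' = 0` both vortex equations become
algebraic identities in Wirtinger calculus. So `Φ` vanishes exactly where
`F' = 1 + ∑ λᵢ / (z - bᵢ)²` does, i.e. at the roots of `P = ∏ (z - bᵢ)² · F'`. As `P` has real
coefficients and no real roots, its `2k` roots come in conjugate pairs, `k` of them in `H`.
-/

open Filter Topology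

/-- `v ↦ a * v + c * conj v`: a map `F` has this real derivative at `z` exactly when
`∂_z F = a` and `∂_z̄ F = c` there. -/
def wirtingerCLM (a c : ℂ) : ℂ →L[ℝ] ℂ :=
  a • ContinuousLinearMap.id ℝ ℂ + c • conjCLE.toContinuousLinearMap

@[simp] lemma wirtingerCLM_apply (a c v : ℂ) : wirtingerCLM a c v = a * v + c * conj v := by
  simp [wirtingerCLM, smul_eq_mul]

def HasWirtingerAt (F : ℂ → ℂ) (a c z : ℂ) : Prop := HasFDerivAt F (wirtingerCLM a c) z

namespace HasWirtingerAt

variable {F G : ℂ → ℂ} {a c a' c' z : ℂ}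

lemma of_hasFDerivAt {L : ℂ →L[ℝ] ℂ} (h : HasFDerivAt F L z) (h1 : L 1 = a + c)
    (hI : L I = (a - c) * I) : HasWirtingerAt F a c z := by
  have hL : L = wirtingerCLM a c := by
    ext v
    have hv : v = v.re • (1 : ℂ) + v.im • I := by simp
    rw [hv, map_add, map_add, map_smul, map_smul, map_smul, map_smul, h1, hI]
    simp only [wirtingerCLM_apply, conj_I, map_one, Complex.real_smul]
    ring
  rwa [HasWirtingerAt, ← hL]

lemma wdz_eq (h : HasWirtingerAt F a c z) : wdz F z = a := by
  rw [wdz, h.fderiv]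
  simp [Complex.ext_iff]
  constructor <;> ring

lemma wdzbar_eq (h : HasWirtingerAt F a c z) : wdzbar F z = c := by
  rw [wdzbar, h.fderiv]
  simp [Complex.ext_iff]
  constructor <;> ring

lemma const (w z : ℂ) : HasWirtingerAt (fun _ => w) 0 0 z :=
  of_hasFDerivAt (hasFDerivAt_const w z) (by simp) (by simp)

lemma star (h : HasWirtingerAt F a c z) :
    HasWirtingerAt (fun w => conj (F w)) (conj c) (conj a) z :=
  of_hasFDerivAt (conjCLE.toContinuousLinearMap.hasFDerivAt.comp z h)
    (by simp [add_comm]) (by simp [Complex.ext_iff]; ring)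

lemma sub (hF : HasWirtingerAt F a c z) (hG : HasWirtingerAt G a' c' z) :
    HasWirtingerAt (fun w => F w - G w) (a - a') (c - c') z :=
  of_hasFDerivAt (HasFDerivAt.sub hF hG) (by simp; ring) (by simp; ring)

lemma mul (hF : HasWirtingerAt F a c z) (hG : HasWirtingerAt G a' c' z) :
    HasWirtingerAt (fun w => F w * G w) (a * G z + F z * a') (c * G z + F z * c') z :=
  of_hasFDerivAt (HasFDerivAt.mul' hF hG) (by simp; ring) (by simp; ring)

lemma inv (hF : HasWirtingerAt F a c z) (h0 : F z ≠ 0) :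
    HasWirtingerAt (fun w => (F w)⁻¹) (-a / F z ^ 2) (-c / F z ^ 2) z :=
  of_hasFDerivAt ((hasFDerivAt_inv' h0).comp z hF) (by simp; field_simp; ring)
    (by simp; field_simp; ring)

end HasWirtingerAt

lemma HasDerivAt.hasWirtingerAt {F : ℂ → ℂ} {a z : ℂ} (h : HasDerivAt F a z) :
    HasWirtingerAt F a 0 z :=
  .of_hasFDerivAt (h.hasFDerivAt.restrictScalars ℝ) (by simp) (by simp [mul_comm])

lemma HasDerivAt.hasWirtingerAt_ofReal_im {F : ℂ → ℂ} {a z : ℂ} (h : HasDerivAt F a z) :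
    HasWirtingerAt (fun w => ((F w).im : ℂ)) (-(I / 2) * a) (I / 2 * conj a) z := by
  have him : (fun w => ((F w).im : ℂ)) = fun w => I / 2 * (conj (F w) - F w) := by
    ext w
    simp [Complex.ext_iff]
    ring
  rw [him]
  convert (HasWirtingerAt.const (I / 2) z).mul (h.hasWirtingerAt.star.sub h.hasWirtingerAt)
    using 1 <;> simp

lemma Filter.EventuallyEq.wdz_eq {F G : ℂ → ℂ} {z : ℂ} (h : F =ᶠ[𝓝 z] G) :
    wdz F z = wdz G z := by
  rw [wdz, wdz, h.fderiv_eq]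

lemma Filter.EventuallyEq.wdzbar_eq {F G : ℂ → ℂ} {z : ℂ} (h : F =ᶠ[𝓝 z] G) :
    wdzbar F z = wdzbar G z := by
  rw [wdzbar, wdzbar, h.fderiv_eq]

section ImaginaryPartAnsatz

variable {F : ℂ → ℂ} {z : ℂ}

lemma higgsOf_im_eq (hF : DifferentiableAt ℂ F z) :
    higgsOf (fun w => (F w).im) z = I * z.im * deriv F z * ((F z).im : ℂ)⁻¹ := by
  unfold higgsOf dzlog cre
  rw [hF.hasDerivAt.hasWirtingerAt_ofReal_im.wdz_eq, Complex.sub_conj]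
  push_cast
  linear_combination (-(I * z.im * deriv F z * ((F z).im : ℂ)⁻¹)) * I_sq

lemma betaOf_im_eq (hF : DifferentiableAt ℂ F z) :
    betaOf (fun w => (F w).im) z =
      I / 2 * (conj (deriv F z) * ((F z).im : ℂ)⁻¹ - (z.im : ℂ)⁻¹) := by
  unfold betaOf dzbarlog cre
  rw [hF.hasDerivAt.hasWirtingerAt_ofReal_im.wdzbar_eq, Complex.sub_conj]
  push_cast
  rw [one_div, mul_inv, mul_inv, Complex.inv_I]
  ring

lemma higgsOf_im_eq_zero_iff (hF : DifferentiableAt ℂ F z) (hz : z.im ≠ 0)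
    (hφ : (F z).im ≠ 0) :
    higgsOf (fun w => (F w).im) z = 0 ↔ deriv F z = 0 := by
  simp [higgsOf_im_eq hF, I_ne_zero, hz, hφ]

lemma vortex_eq_one_of_im (hF : AnalyticAt ℂ F z) (hz : z.im ≠ 0)
    (hφ : (F z).im ≠ 0) :
    wdzbar (higgsOf fun w => (F w).im) z +
      betaOf (fun w => (F w).im) z * higgsOf (fun w => (F w).im) z = 0 := by
  have hΦ : HasWirtingerAt (fun w => I * w.im * deriv F w * ((F w).im : ℂ)⁻¹) _ _ z :=
    (((HasWirtingerAt.const I z).mul (hasDerivAt_id' z).hasWirtingerAt_ofReal_im).mul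
      hF.deriv.differentiableAt.hasDerivAt.hasWirtingerAt).mul
      (hF.differentiableAt.hasDerivAt.hasWirtingerAt_ofReal_im.inv (by exact_mod_cast hφ))
  have hev : higgsOf (fun w => (F w).im) =ᶠ[𝓝 z]
      fun w => I * w.im * deriv F w * ((F w).im : ℂ)⁻¹ :=
    hF.eventually_analyticAt.mono fun w hw => higgsOf_im_eq hw.differentiableAt
  rw [hev.wdzbar_eq, hΦ.wdzbar_eq, betaOf_im_eq hF.differentiableAt,
    higgsOf_im_eq hF.differentiableAt]
  have hz' : (z.im : ℂ) ≠ 0 := by exact_mod_cast hz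
  have hφ' : ((F z).im : ℂ) ≠ 0 := by exact_mod_cast hφ
  field_simp
  simp only [map_one]
  ring

lemma wdz_betaOf_im (hF : AnalyticAt ℂ F z) (hz : z.im ≠ 0) (hφ : (F z).im ≠ 0) :
    wdz (betaOf fun w => (F w).im) z =
      ((1 / z.im ^ 2 - normSq (deriv F z) / (F z).im ^ 2) / 4 : ℝ) := by
  have hβ : HasWirtingerAt
      (fun w => I / 2 * (conj (deriv F w) * ((F w).im : ℂ)⁻¹ - (w.im : ℂ)⁻¹)) _ _ z :=
    (HasWirtingerAt.const (I / 2) z).mul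
      ((hF.deriv.differentiableAt.hasDerivAt.hasWirtingerAt.star.mul
        (hF.differentiableAt.hasDerivAt.hasWirtingerAt_ofReal_im.inv (by exact_mod_cast hφ))).sub
        ((hasDerivAt_id' z).hasWirtingerAt_ofReal_im.inv (by exact_mod_cast hz)))
  have hev : betaOf (fun w => (F w).im) =ᶠ[𝓝 z]
      fun w => I / 2 * (conj (deriv F w) * ((F w).im : ℂ)⁻¹ - (w.im : ℂ)⁻¹) :=
    hF.eventually_analyticAt.mono fun w hw => betaOf_im_eq hw.differentiableAt
  rw [hev.wdz_eq, hβ.wdz_eq]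
  have hnorm : conj (deriv F z) * deriv F z = (normSq (deriv F z) : ℂ) := by
    rw [mul_comm, mul_conj]
  rw [map_zero]
  push_cast
  linear_combination (-1 / (4 * ((F z).im : ℂ) ^ 2)) * hnorm +
    ((conj (deriv F z) * deriv F z / ((F z).im : ℂ) ^ 2 - 1 / (z.im : ℂ) ^ 2) / 4) * I_sq

lemma normSq_higgsOf_im (hF : DifferentiableAt ℂ F z) :
    normSq (higgsOf (fun w => (F w).im) z) = z.im ^ 2 * normSq (deriv F z) / (F z).im ^ 2 := by
  rw [higgsOf_im_eq hF]
  simp [normSq_ofReal]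
  ring

lemma vortex_eq_two_of_im (hF : AnalyticAt ℂ F z) (hz : z.im ≠ 0)
    (hφ : (F z).im ≠ 0) :
    4 * z.im ^ 2 * (wdz (betaOf fun w => (F w).im) z).re =
      1 - normSq (higgsOf (fun w => (F w).im) z) := by
  rw [wdz_betaOf_im hF hz hφ, ofReal_re, normSq_higgsOf_im hF.differentiableAt]
  field_simp

lemma fderiv_im_apply (hF : DifferentiableAt ℂ F z) (v : ℂ) :
    fderiv ℝ (fun w => (F w).im) z v = (deriv F z * v).im := by
  have h : HasFDerivAt (fun w => (F w).im) _ z :=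
    imCLM.hasFDerivAt.comp z (hF.hasDerivAt.hasFDerivAt.restrictScalars ℝ)
  rw [h.fderiv]
  simp [mul_comm]

lemma fderiv_re_apply (hF : DifferentiableAt ℂ F z) (v : ℂ) :
    fderiv ℝ (fun w => (F w).re) z v = (deriv F z * v).re := by
  have h : HasFDerivAt (fun w => (F w).re) _ z :=
    reCLM.hasFDerivAt.comp z (hF.hasDerivAt.hasFDerivAt.restrictScalars ℝ)
  rw [h.fderiv]
  simp [mul_comm]

lemma lap2_im_eq_zero (hF : AnalyticAt ℂ F z) : lap2 (fun w => (F w).im) z = 0 := by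
  have ev1 : (fun w => fderiv ℝ (fun w => (F w).im) w 1) =ᶠ[𝓝 z] fun w => (deriv F w).im :=
    hF.eventually_analyticAt.mono fun w hw => by simp [fderiv_im_apply hw.differentiableAt]
  have ev2 : (fun w => fderiv ℝ (fun w => (F w).im) w I) =ᶠ[𝓝 z] fun w => (deriv F w).re :=
    hF.eventually_analyticAt.mono fun w hw => by simp [fderiv_im_apply hw.differentiableAt]
  rw [lap2, ev1.fderiv_eq, ev2.fderiv_eq, fderiv_im_apply hF.deriv.differentiableAt,
    fderiv_re_apply hF.deriv.differentiableAt]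
  simp

end ImaginaryPartAnsatz

section THooftPotential

variable {k : ℕ} {b lam : Fin k → ℝ} {z : ℂ}

def tHooftPotential (k : ℕ) (b lam : Fin k → ℝ) (z : ℂ) : ℂ :=
  z - ∑ i : Fin k, (lam i : ℂ) / (z - (b i : ℂ))

lemma hasDerivAt_tHooftPotential (hz : ∀ i, z ≠ b i) :
    HasDerivAt (tHooftPotential k b lam)
      (1 + ∑ i : Fin k, (lam i : ℂ) / (z - (b i : ℂ)) ^ 2) z := by
  have hterm : ∀ i ∈ Finset.univ, HasDerivAt (fun w => (lam i : ℂ) / (w - (b i : ℂ)))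
      (-((lam i : ℂ) / (z - (b i : ℂ)) ^ 2)) z := fun i _ =>
    ((hasDerivAt_const z (lam i : ℂ)).fun_div ((hasDerivAt_id' z).sub_const (b i : ℂ))
      (sub_ne_zero.2 (hz i))).congr_deriv (by ring)
  exact ((hasDerivAt_id' z).sub (HasDerivAt.fun_sum hterm)).congr_deriv
    (by simp [sub_eq_add_neg])

lemma analyticAt_tHooftPotential (hz : ∀ i, z ≠ b i) :
    AnalyticAt ℂ (tHooftPotential k b lam) z := by
  unfold tHooftPotential
  fun_prop (disch := exact sub_ne_zero.2 (hz _))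

lemma tHooftPotential_im (z : ℂ) :
    (tHooftPotential k b lam z).im =
      z.im * (1 + ∑ i : Fin k, lam i / normSq (z - (b i : ℂ))) := by
  simp [tHooftPotential, div_im, mul_add, Finset.mul_sum, mul_div_assoc, mul_comm]

lemma tHooftPotential_im_pos (hlam : ∀ i, 0 < lam i) (hz : 0 < z.im) :
    0 < (tHooftPotential k b lam z).im := by
  rw [tHooftPotential_im]
  have : 0 ≤ ∑ i : Fin k, lam i / normSq (z - (b i : ℂ)) :=
    Finset.sum_nonneg fun i _ => div_nonneg (hlam i).le (normSq_nonneg _)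
  positivity

end THooftPotential

section ConjugationInvariantPolynomial

open Polynomial

lemma natDegree_prod_X_sub_C_sq {R ι : Type*} [CommRing R] [Nontrivial R] (s : Finset ι)
    (c : ι → R) : (∏ j ∈ s, (X - C (c j)) ^ 2).natDegree = 2 * s.card := by
  rw [natDegree_prod_of_monic _ _ fun j _ => (monic_X_sub_C _).pow 2]
  simp [(monic_X_sub_C _).natDegree_pow, mul_comm]

lemma card_roots_filter_im_neg_of_map_conj {p : ℂ[X]} (hp : p.map (starRingEnd ℂ) = p) :
    Multiset.card (p.roots.filter fun z => z.im < 0) =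
      Multiset.card (p.roots.filter fun z => 0 < z.im) := by
  have hroots : p.roots.map (starRingEnd ℂ) = p.roots := by
    conv_rhs => rw [← hp]
    exact ((IsAlgClosed.splits p).roots_map _).symm
  conv_lhs => rw [← hroots]
  simp [Multiset.countP_map, ← Multiset.countP_eq_card_filter]

lemma two_mul_card_roots_filter_im_pos {p : ℂ[X]} (hp : p.map (starRingEnd ℂ) = p)
    (hreal : ∀ x : ℝ, p.eval (x : ℂ) ≠ 0) :
    2 * Multiset.card (p.roots.filter fun z => 0 < z.im) = p.natDegree := by
  have hp0 : p ≠ 0 := fun h => hreal 0 (by simp [h])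
  have hnonreal : (p.roots.filter fun z => ¬ 0 < z.im) = p.roots.filter fun z => z.im < 0 := by
    refine Multiset.filter_congr fun z hz => ?_
    have him : z.im ≠ 0 := fun him => hreal z.re <| by
      rw [show (z.re : ℂ) = z from Complex.ext rfl (by simp [him])]
      exact (mem_roots hp0).1 hz
    exact ⟨fun h => lt_of_le_of_ne (not_lt.1 h) him, fun h => not_lt.2 h.le⟩
  rw [← IsAlgClosed.card_roots_eq_natDegree]
  conv_rhs => rw [← Multiset.filter_add_not (fun z => 0 < z.im) p.roots]
  rw [Multiset.card_add, hnonreal, card_roots_filter_im_neg_of_map_conj hp]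
  ring

end ConjugationInvariantPolynomial

section THooftPolynomial

open Polynomial

variable {k : ℕ} {b lam : Fin k → ℝ}

lemma P10_map_conj : (P10 k b lam).map (starRingEnd ℂ) = P10 k b lam := by
  simp only [P10, Polynomial.map_add, Polynomial.map_prod, Polynomial.map_sum, Polynomial.map_mul,
    Polynomial.map_pow, Polynomial.map_sub, map_X, map_C, conj_ofReal]

lemma degree_P10 : (P10 k b lam).degree = 2 * k := by
  have hQ : (∏ i : Fin k, (X - C (b i : ℂ)) ^ 2).Monic :=
    monic_prod_of_monic _ _ fun i _ => (monic_X_sub_C _).pow 2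
  have hQdeg : (∏ i : Fin k, (X - C (b i : ℂ)) ^ 2).degree = ((2 * k : ℕ) : WithBot ℕ) := by
    rw [degree_eq_natDegree hQ.ne_zero, natDegree_prod_X_sub_C_sq, Finset.card_univ,
      Fintype.card_fin]
  have hS : (∑ i : Fin k, C (lam i : ℂ) *
      ∏ j ∈ Finset.univ.erase i, (X - C (b j : ℂ)) ^ 2).degree < ((2 * k : ℕ) : WithBot ℕ) := by
    refine (degree_sum_le _ _).trans_lt <|
      (Finset.sup_lt_iff (WithBot.bot_lt_coe _)).2 fun i _ => ?_
    refine degree_le_natDegree.trans_lt ?_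
    have hlt := (natDegree_C_mul_le (lam i : ℂ) _).trans_lt <|
      (natDegree_prod_X_sub_C_sq (Finset.univ.erase i) fun j => (b j : ℂ)).trans_lt
        (show 2 * (Finset.univ.erase i).card < 2 * k by simp [i.pos])
    exact_mod_cast hlt
  unfold P10
  rw [degree_add_eq_left_of_degree_lt (hQdeg ▸ hS), hQdeg]
  push_cast
  rfl

lemma eval_ofReal_P10_ne_zero (hb : Function.Injective b) (hlam : ∀ i, 0 < lam i) (x : ℝ) :
    (P10 k b lam).eval (x : ℂ) ≠ 0 := by
  have hcast : (P10 k b lam).eval (x : ℂ) = ((∏ i : Fin k, (x - b i) ^ 2 +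
      ∑ i : Fin k, lam i * ∏ j ∈ Finset.univ.erase i, (x - b j) ^ 2 : ℝ) : ℂ) := by
    simp only [P10, eval_add, eval_prod, eval_finsetSum, eval_mul, eval_pow, eval_sub, eval_X,
      eval_C]
    push_cast
    rfl
  rw [hcast, ofReal_ne_zero]
  have hterm : ∀ i, 0 ≤ lam i * ∏ j ∈ Finset.univ.erase i, (x - b j) ^ 2 := fun i =>
    mul_nonneg (hlam i).le (Finset.prod_nonneg fun j _ => sq_nonneg _)
  have hQ : 0 ≤ ∏ i : Fin k, (x - b i) ^ 2 := Finset.prod_nonneg fun i _ => sq_nonneg _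
  by_cases hx : ∀ i, x ≠ b i
  · have hQpos : 0 < ∏ i : Fin k, (x - b i) ^ 2 :=
      Finset.prod_pos fun i _ => sq_pos_of_ne_zero (sub_ne_zero.2 (hx i))
    exact (add_pos_of_pos_of_nonneg hQpos (Finset.sum_nonneg fun i _ => hterm i)).ne'
  · obtain ⟨i, rfl⟩ := not_forall_not.1 hx
    have hi : 0 < lam i * ∏ j ∈ Finset.univ.erase i, (b i - b j) ^ 2 :=
      mul_pos (hlam i) <| Finset.prod_pos fun j hj =>
        sq_pos_of_ne_zero (sub_ne_zero.2 fun h => (Finset.ne_of_mem_erase hj) (hb h).symm)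
    exact (add_pos_of_nonneg_of_pos hQ
      (Finset.sum_pos' (fun i _ => hterm i) ⟨i, Finset.mem_univ i, hi⟩)).ne'

lemma eval_P10 {z : ℂ} (hz : ∀ i, z ≠ b i) :
    (P10 k b lam).eval z = (∏ i : Fin k, (z - (b i : ℂ)) ^ 2) *
      (1 + ∑ i : Fin k, (lam i : ℂ) / (z - (b i : ℂ)) ^ 2) := by
  simp only [P10, eval_add, eval_prod, eval_finsetSum, eval_mul, eval_pow, eval_sub, eval_X,
    eval_C, mul_add, mul_one, Finset.mul_sum]
  congr 1
  refine Finset.sum_congr rfl fun i _ => ?_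
  rw [← Finset.mul_prod_erase Finset.univ _ (Finset.mem_univ i)]
  have := sub_ne_zero.2 (hz i)
  field_simp

end THooftPolynomial

/-- The symmetric 't Hooft super-potential φ(z) = Im(z − Σᵢ λᵢ/(z − bᵢ)) is positive and
harmonic on H, equals r(1 + Σ λᵢ/|z−bᵢ|²), the associated ansatz pair (β, Φ) satisfies the
hyperbolic vortex equations, Φ vanishes exactly at the zeros of 1 + Σ λᵢ/(z−bᵢ)², i.e. at
the roots of P(z) = Π(z−bᵢ)² + Σ λᵢ Π_{j≠i}(z−bⱼ)², and P has degree 2k, no real roots, and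
exactly k roots (with multiplicity) in H. -/
theorem tHooft_vortex (k : ℕ) (b lam : Fin k → ℝ)
    (hb : Function.Injective b) (hlam : ∀ i, 0 < lam i) :
    (∀ z ∈ H,
      0 < phi10 k b lam z ∧
      phi10 k b lam z = z.im * (1 + ∑ i : Fin k, lam i / Complex.normSq (z - (b i : ℂ))) ∧
      lap2 (phi10 k b lam) z = 0) ∧
    (∀ z ∈ H,
      wdzbar (higgsOf (phi10 k b lam)) z +
        betaOf (phi10 k b lam) z * higgsOf (phi10 k b lam) z = 0 ∧
      4 * z.im^2 * (wdz (betaOf (phi10 k b lam)) z).re =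
        1 - Complex.normSq (higgsOf (phi10 k b lam) z)) ∧
    (∀ z ∈ H,
      (higgsOf (phi10 k b lam) z = 0 ↔
        1 + ∑ i : Fin k, (lam i : ℂ) / (z - (b i : ℂ))^2 = 0) ∧
      (higgsOf (phi10 k b lam) z = 0 ↔ (P10 k b lam).eval z = 0)) ∧
    (P10 k b lam).degree = 2 * k ∧
    (∀ x : ℝ, (P10 k b lam).eval ((x : ℂ)) ≠ 0) ∧
    Multiset.card ((P10 k b lam).roots.filter (fun z => 0 < z.im)) = k := by
  have hpole : ∀ z ∈ H, ∀ i, z ≠ b i := fun z (hz : 0 < z.im) i h => hz.ne' (by simp [h])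
  have hF : ∀ z ∈ H, AnalyticAt ℂ (tHooftPotential k b lam) z := fun z hz =>
    analyticAt_tHooftPotential (hpole z hz)
  have hφ : ∀ z ∈ H, (tHooftPotential k b lam z).im ≠ 0 := fun z hz =>
    (tHooftPotential_im_pos hlam hz).ne'
  have hzero : ∀ z ∈ H, higgsOf (phi10 k b lam) z = 0 ↔
      1 + ∑ i : Fin k, (lam i : ℂ) / (z - (b i : ℂ)) ^ 2 = 0 := fun z hz =>
    (hasDerivAt_tHooftPotential (hpole z hz)).deriv ▸
      higgsOf_im_eq_zero_iff (hF z hz).differentiableAt (ne_of_gt hz) (hφ z hz)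
  have hreal := eval_ofReal_P10_ne_zero hb hlam
  refine ⟨fun z hz => ⟨tHooftPotential_im_pos hlam hz, tHooftPotential_im z,
      lap2_im_eq_zero (hF z hz)⟩,
    fun z hz => ⟨vortex_eq_one_of_im (hF z hz) (ne_of_gt hz) (hφ z hz),
      vortex_eq_two_of_im (hF z hz) (ne_of_gt hz) (hφ z hz)⟩,
    fun z hz => ⟨hzero z hz, ?_⟩, degree_P10, hreal, ?_⟩
  · rw [hzero z hz, eval_P10 (hpole z hz), mul_eq_zero, or_iff_right <|
      Finset.prod_ne_zero_iff.2 fun i _ => pow_ne_zero 2 (sub_ne_zero.2 (hpole z hz i))]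
  · have h2k := two_mul_card_roots_filter_im_pos P10_map_conj hreal
    rw [Polynomial.natDegree_eq_of_degree_eq_some (by exact_mod_cast degree_P10)] at h2k
    omega
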